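/- arXiv:1107.2704 — 4 statements merged into one kernel-verified Lean document; each statement's English description precedes it below -/
import Mathlib

section
/- If λ < 0, then the energy functional E(ψ) = ∫|ψ'|² + ∫ξ²|ψ|² + (λ/2)∫|ψ|⁴ − V₀∫cos²(αξ)|ψ|² is bounded from below on the unit L²-sphere Σ₁: for every ψ ∈ Σ₁, E(ψ) ≥ −λ²C² /16 − |V₀|, where C is the Gagliardo–Nirenberg constant with ‖ψ‖₄⁴ ≤ C‖ψ‖₂³‖ψ'‖₂. -/
/-!
On the unit sphere the Gagliardo–Nirenberg inequality bounds the quartic term by `C t` with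
`t = ‖ψ'‖₂`, and `cos²` lies in `[0, 1]`. Since `λ < 0`, the energy is therefore at least
`t² + (λC/2) t - |V₀|`, and the quadratic in `t` is minimised at `t = -λC/4`.
-/

open MeasureTheory Real

/-- Membership in the energy space `X`. -/
def InX (ψ : ℝ → ℂ) : Prop :=
  Differentiable ℝ ψ ∧
  Integrable (fun ξ : ℝ => ‖ψ ξ‖ ^ 2) ∧
  Integrable (fun ξ : ℝ => ‖deriv ψ ξ‖ ^ 2) ∧
  Integrable (fun ξ : ℝ => ξ ^ 2 * ‖ψ ξ‖ ^ 2) ∧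
  Integrable (fun ξ : ℝ => ‖ψ ξ‖ ^ 4)

/-- The Gross–Pitaevskii energy functional. -/
noncomputable def energy (lam V₀ α : ℝ) (ψ : ℝ → ℂ) : ℝ :=
  (∫ ξ : ℝ, ‖deriv ψ ξ‖ ^ 2) + (∫ ξ : ℝ, ξ ^ 2 * ‖ψ ξ‖ ^ 2)
    + lam / 2 * (∫ ξ : ℝ, ‖ψ ξ‖ ^ 4)
    - V₀ * (∫ ξ : ℝ, Real.cos (α * ξ) ^ 2 * ‖ψ ξ‖ ^ 2)

lemma neg_sq_div_four_le_sq_add_mul (t c : ℝ) : -(c ^ 2 / 4) ≤ t ^ 2 + c * t := by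
  nlinarith [sq_nonneg (t + c / 2)]

lemma neg_sq_mul_sq_div_sixteen_le_add {lam C a d : ℝ} (hlam : lam ≤ 0) (ha : 0 ≤ a)
    (hd : d ≤ C * √a) : -(lam ^ 2 * C ^ 2) / 16 ≤ a + lam / 2 * d := by
  have hquad := neg_sq_div_four_le_sq_add_mul √a (lam * C / 2)
  rw [Real.sq_sqrt ha] at hquad
  have hnonlin : lam / 2 * (C * √a) ≤ lam / 2 * d := mul_le_mul_of_nonpos_left hd (by linarith)
  linarith

lemma abs_integral_mul_le_integral {X : Type*} [MeasurableSpace X] {μ : Measure X}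
    {f w : X → ℝ} (hf : Integrable f μ) (hf0 : ∀ x, 0 ≤ f x) (hw : ∀ x, |w x| ≤ 1) :
    |∫ x, w x * f x ∂μ| ≤ ∫ x, f x ∂μ := by
  refine norm_integral_le_of_norm_le (f := fun x => w x * f x) hf (.of_forall fun x => ?_)
  rw [Real.norm_eq_abs, abs_mul, abs_of_nonneg (hf0 x)]
  exact mul_le_of_le_one_left (hf0 x) (hw x)

theorem energy_lower_bound_attractive_general (lam V₀ α : ℝ) (hlam : lam < 0)
    (C : ℝ)
    (hGN : ∀ ψ : ℝ → ℂ, Differentiable ℝ ψ →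
        Integrable (fun ξ : ℝ => ‖ψ ξ‖ ^ 2) →
        Integrable (fun ξ : ℝ => ‖deriv ψ ξ‖ ^ 2) →
        (∫ ξ : ℝ, ‖ψ ξ‖ ^ 4) ≤
          C * (∫ ξ : ℝ, ‖ψ ξ‖ ^ 2) ^ ((3 : ℝ) / 2)
            * (∫ ξ : ℝ, ‖deriv ψ ξ‖ ^ 2) ^ ((1 : ℝ) / 2))
    (ψ : ℝ → ℂ) (hX : InX ψ) (hQ : (∫ ξ : ℝ, ‖ψ ξ‖ ^ 2) = 1) :
    energy lam V₀ α ψ ≥ -(lam ^ 2 * C ^ 2) / 16 - |V₀| := by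
  obtain ⟨hdiff, hL2, hD2, -, -⟩ := hX
  have hGNψ : (∫ ξ : ℝ, ‖ψ ξ‖ ^ 4) ≤ C * √(∫ ξ : ℝ, ‖deriv ψ ξ‖ ^ 2) := by
    simpa [hQ, Real.sqrt_eq_rpow] using hGN ψ hdiff hL2 hD2
  have hkin := neg_sq_mul_sq_div_sixteen_le_add hlam.le
    (integral_nonneg fun ξ => by positivity) hGNψ
  have htrap : 0 ≤ ∫ ξ : ℝ, ξ ^ 2 * ‖ψ ξ‖ ^ 2 := integral_nonneg fun ξ => by positivity
  have hpot : V₀ * (∫ ξ : ℝ, Real.cos (α * ξ) ^ 2 * ‖ψ ξ‖ ^ 2) ≤ |V₀| := by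
    have hp := abs_integral_mul_le_integral hL2 (fun ξ => by positivity) fun ξ =>
      (abs_of_nonneg (sq_nonneg (Real.cos (α * ξ)))).trans_le (Real.cos_sq_le_one _)
    rw [hQ] at hp
    calc V₀ * _ ≤ |V₀| * |_| := (le_abs_self _).trans (abs_mul _ _).le
      _ ≤ |V₀| := mul_le_of_le_one_right (abs_nonneg _) hp
  unfold energy
  linarith

theorem energy_lower_bound_attractive (lam V₀ α : ℝ) (hlam : lam < 0)
    (C : ℝ) (hC : 0 < C)
    (hGN : ∀ ψ : ℝ → ℂ, Differentiable ℝ ψ →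
        Integrable (fun ξ : ℝ => ‖ψ ξ‖ ^ 2) →
        Integrable (fun ξ : ℝ => ‖deriv ψ ξ‖ ^ 2) →
        (∫ ξ : ℝ, ‖ψ ξ‖ ^ 4) ≤
          C * (∫ ξ : ℝ, ‖ψ ξ‖ ^ 2) ^ ((3 : ℝ) / 2)
            * (∫ ξ : ℝ, ‖deriv ψ ξ‖ ^ 2) ^ ((1 : ℝ) / 2))
    (ψ : ℝ → ℂ) (hX : InX ψ) (hQ : (∫ ξ : ℝ, ‖ψ ξ‖ ^ 2) = 1) :
    energy lam V₀ α ψ ≥ -(lam ^ 2 * C ^ 2) / 16 - |V₀| :=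
  energy_lower_bound_attractive_general lam V₀ α hlam C hGN ψ hX hQ
end

section
/- Let ψ ∈ H¹(ℝ) be a complex-valued solution of −ψ'' + ξ²ψ + λ|ψ|²ψ − V₀cos²(αξ)ψ = μψ. Then there exist a real-valued solution U of the same equation and θ ∈ ℝ such that ψ(ξ) = e^{iθ} U(ξ) for all ξ. -/
/-
Writing ψ = u + i v, both u and v solve the real linear equation h'' = q h with the continuous
potential q = ξ² + λ|ψ|² - V₀cos²(αξ) - μ. Their Wronskian u v' - u' v is constant and bounded by
the integrable function (|ψ|² + |ψ'|²) / 2, so it vanishes. Uniqueness for the linear equation then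
makes u and v proportional, i.e. ψ = z w with w real, and the phase of z is e^{iθ}.
-/

open MeasureTheory Real

/-- `ψ : ℝ → ℂ` is an `H¹` solution of the stationary Gross–Pitaevskii equation
`-ψ'' + ξ²ψ + λ|ψ|²ψ - V₀cos²(αξ)ψ = μψ`. -/
def IsGPSolutionC (μ lam V₀ α : ℝ) (ψ : ℝ → ℂ) : Prop :=
  Differentiable ℝ ψ ∧ Differentiable ℝ (deriv ψ) ∧
  Integrable (fun ξ : ℝ => ‖ψ ξ‖ ^ 2) ∧
  Integrable (fun ξ : ℝ => ‖deriv ψ ξ‖ ^ 2) ∧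
  ∀ ξ : ℝ, -deriv (deriv ψ) ξ + (ξ ^ 2 : ℝ) * ψ ξ + (lam : ℂ) * (‖ψ ξ‖ ^ 2 : ℝ) * ψ ξ
      - (V₀ : ℂ) * (Real.cos (α * ξ) ^ 2 : ℝ) * ψ ξ = (μ : ℂ) * ψ ξ

/-- `U : ℝ → ℝ` is a real `H¹` solution of the same equation. -/
def IsGPSolutionR (μ lam V₀ α : ℝ) (U : ℝ → ℝ) : Prop :=
  Differentiable ℝ U ∧ Differentiable ℝ (deriv U) ∧
  Integrable (fun ξ : ℝ => U ξ ^ 2) ∧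
  Integrable (fun ξ : ℝ => deriv U ξ ^ 2) ∧
  ∀ ξ : ℝ, -deriv (deriv U) ξ + ξ ^ 2 * U ξ + lam * (U ξ ^ 2) * U ξ
      - V₀ * Real.cos (α * ξ) ^ 2 * U ξ = μ * U ξ

open Set

theorem eq_zero_of_norm_le_integrable {α E : Type*} [MeasurableSpace α] {μ : Measure α}
    [NormedAddCommGroup E] (hμ : μ univ = ⊤) {f : α → ℝ} (hf : Integrable f μ) {c : E}
    (hc : ∀ x, ‖c‖ ≤ f x) : c = 0 := by
  have hconst : Integrable (fun _ => c) μ :=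
    hf.mono' aestronglyMeasurable_const (Filter.Eventually.of_forall hc)
  rcases integrable_const_iff.mp hconst with h | h
  · exact h
  · exact absurd hμ (measure_ne_top μ univ)

theorem ContinuousLinearMap.deriv_comp {E F : Type*} [NormedAddCommGroup E] [NormedSpace ℝ E]
    [NormedAddCommGroup F] [NormedSpace ℝ F] (L : E →L[ℝ] F) {h : ℝ → E}
    (hh : Differentiable ℝ h) : deriv (L ∘ h) = L ∘ deriv h :=
  funext fun t => (L.hasFDerivAt.comp_hasDerivAt t (hh t).hasDerivAt).deriv

theorem deriv_const_mul_ofReal {U : ℝ → ℝ} (hU : Differentiable ℝ U) (c : ℂ) :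
    deriv (fun ξ => c * (U ξ : ℂ)) = fun ξ => c * ((deriv U ξ : ℝ) : ℂ) :=
  funext fun ξ => ((hU ξ).hasDerivAt.ofReal_comp.const_mul c).deriv

theorem Differentiable.of_const_mul_ofReal {U : ℝ → ℝ} {c : ℂ} (hc : c ≠ 0)
    (h : Differentiable ℝ fun ξ => c * (U ξ : ℂ)) : Differentiable ℝ U := by
  have hU : U = fun ξ => (c⁻¹ * (c * U ξ)).re := by simp [hc]
  rw [hU]
  exact Complex.reCLM.differentiable.comp (h.const_mul _)

theorem Complex.sq_norm_eq_re_sq_add_im_sq (z : ℂ) : ‖z‖ ^ 2 = z.re ^ 2 + z.im ^ 2 := by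
  rw [Complex.sq_norm, Complex.normSq_apply]; ring

theorem lipschitzWith_prodMk_snd_smul_fst {E : Type*} [NormedAddCommGroup E] [NormedSpace ℝ E]
    (c : ℝ) : LipschitzWith (max 1 |c|).toNNReal (fun p : E × E => (p.2, c • p.1)) := by
  refine LipschitzWith.of_dist_le_mul fun p p' => ?_
  rw [Real.coe_toNNReal _ (le_max_of_le_left zero_le_one), Prod.dist_eq, Prod.dist_eq,
    dist_smul₀, Real.norm_eq_abs]
  refine max_le ?_ ?_
  · exact (le_max_right _ _).trans
      (le_mul_of_one_le_left (le_max_of_le_left dist_nonneg) (le_max_left _ _))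
  · exact mul_le_mul (le_max_right _ _) (le_max_left _ _) dist_nonneg
      (le_max_of_le_left zero_le_one)

def SolvesLinearODE {E : Type*} [NormedAddCommGroup E] [NormedSpace ℝ E] (q : ℝ → ℝ)
    (h : ℝ → E) : Prop :=
  Differentiable ℝ h ∧ Differentiable ℝ (deriv h) ∧ ∀ t, deriv (deriv h) t = q t • h t

noncomputable def wronskian (u v : ℝ → ℝ) (t : ℝ) : ℝ := u t * deriv v t - deriv u t * v t

namespace SolvesLinearODE

section General

variable {E F : Type*} [NormedAddCommGroup E] [NormedSpace ℝ E] [NormedAddCommGroup F]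
  [NormedSpace ℝ F] {q : ℝ → ℝ} {h : ℝ → E}

/-- `(h, h')` solves the first-order system `X' = (X.2, q t • X.1)`, whose right-hand side is
Lipschitz uniformly on bounded time intervals. -/
theorem eq_zero_of_eq_zero (hsol : SolvesLinearODE q h) (hq : Continuous q) {t₀ : ℝ}
    (h₀ : h t₀ = 0) (h₀' : deriv h t₀ = 0) : h = 0 := by
  obtain ⟨hd, hd', heq⟩ := hsol
  funext t
  set R := |t| + |t₀| + 1
  have hmem : ∀ s, |s| < R → s ∈ Ioo (-R) R := fun s hs => abs_lt.mp hs
  obtain ⟨C, hC⟩ := (isCompact_Icc (a := -R) (b := R)).exists_bound_of_continuousOn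
    hq.continuousOn
  have hlip : ∀ s ∈ Ioo (-R) R,
      LipschitzOnWith (max 1 C).toNNReal (fun p : E × E => (p.2, q s • p.1)) univ := by
    intro s hs
    refine ((lipschitzWith_prodMk_snd_smul_fst (q s)).weaken ?_).lipschitzOnWith
    gcongr
    simpa using hC s (Ioo_subset_Icc_self hs)
  have hflow : ∀ s, HasDerivAt (fun s => (h s, deriv h s)) (deriv h s, q s • h s) s :=
    fun s => heq s ▸ (hd s).hasDerivAt.prodMk (hd' s).hasDerivAt
  have hzero := ODE_solution_unique_of_mem_Ioo (g := fun _ => 0) hlip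
    (hmem t₀ (by linarith [abs_nonneg t]))
    (fun s _ => ⟨hflow s, mem_univ _⟩)
    (fun s _ => ⟨by simpa [Prod.zero_eq_mk] using hasDerivAt_const s (0 : E × E), mem_univ _⟩)
    (by simp [h₀, h₀']) (hmem t (by linarith [abs_nonneg t₀]))
  exact congrArg Prod.fst hzero

theorem clm_comp (hsol : SolvesLinearODE q h) (L : E →L[ℝ] F) : SolvesLinearODE q (L ∘ h) := by
  obtain ⟨hd, hd', heq⟩ := hsol
  refine ⟨L.differentiable.comp hd, ?_, fun t => ?_⟩
  · rw [L.deriv_comp hd]; exact L.differentiable.comp hd'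
  · rw [L.deriv_comp hd, L.deriv_comp hd', Function.comp_apply, heq, map_smul,
      Function.comp_apply]

theorem sub_smul {g : ℝ → E} (hh : SolvesLinearODE q h) (hg : SolvesLinearODE q g) (c : ℝ) :
    SolvesLinearODE q (fun t => h t - c • g t) := by
  obtain ⟨hd, hd', heq⟩ := hh
  obtain ⟨gd, gd', geq⟩ := hg
  have hderiv : deriv (fun t => h t - c • g t) = fun t => deriv h t - c • deriv g t :=
    funext fun t => ((hd t).hasDerivAt.sub ((gd t).hasDerivAt.const_smul c)).deriv
  have hderiv' : deriv (fun t => deriv h t - c • deriv g t) =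
      fun t => deriv (deriv h) t - c • deriv (deriv g) t :=
    funext fun t => ((hd' t).hasDerivAt.sub ((gd' t).hasDerivAt.const_smul c)).deriv
  refine ⟨hd.sub (gd.const_smul c), ?_, fun t => ?_⟩
  · rw [hderiv]; exact hd'.sub (gd'.const_smul c)
  · rw [hderiv, hderiv']
    show deriv (deriv h) t - c • deriv (deriv g) t = q t • (h t - c • g t)
    rw [heq, geq, smul_sub, smul_comm c]

end General

variable {q : ℝ → ℝ} {u v : ℝ → ℝ}

theorem wronskian_eq (hu : SolvesLinearODE q u) (hv : SolvesLinearODE q v) (s t : ℝ) :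
    wronskian u v s = wronskian u v t := by
  obtain ⟨ud, ud', ueq⟩ := hu
  obtain ⟨vd, vd', veq⟩ := hv
  have hW : ∀ t, HasDerivAt (wronskian u v) 0 t := fun t =>
    ((ud t).hasDerivAt.mul (vd' t).hasDerivAt).sub
      ((ud' t).hasDerivAt.mul (vd t).hasDerivAt) |>.congr_deriv <| by
        rw [ueq, veq, smul_eq_mul, smul_eq_mul]; ring
  exact is_const_of_deriv_eq_zero (fun t => (hW t).differentiableAt) (fun t => (hW t).deriv) s t

/-- The constant `|W|` is bounded by the integrable `(u² + v² + u'² + v'²) / 2`, and a nonzero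
constant is not integrable on `ℝ`. -/
theorem wronskian_eq_zero (hu : SolvesLinearODE q u) (hv : SolvesLinearODE q v)
    (h₀ : Integrable fun t => u t ^ 2 + v t ^ 2)
    (h₁ : Integrable fun t => deriv u t ^ 2 + deriv v t ^ 2) (t : ℝ) :
    wronskian u v t = 0 := by
  refine eq_zero_of_norm_le_integrable (by simp) ((h₀.add h₁).div_const 2) fun s => ?_
  rw [hu.wronskian_eq hv t s, Real.norm_eq_abs, wronskian, Pi.add_apply, abs_le]
  constructor <;> nlinarith [sq_nonneg (u s - deriv v s), sq_nonneg (u s + deriv v s),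
    sq_nonneg (deriv u s - v s), sq_nonneg (deriv u s + v s)]

theorem eq_mul_of_wronskian_eq_zero (hu : SolvesLinearODE q u) (hv : SolvesLinearODE q v)
    (hq : Continuous q) {t₀ : ℝ} (hv₀ : v t₀ ≠ 0) (hW : wronskian u v t₀ = 0) (t : ℝ) :
    u t = u t₀ / v t₀ * v t := by
  set c := u t₀ / v t₀
  have hderiv : deriv (fun t => u t - c • v t) t₀ = deriv u t₀ - c * deriv v t₀ :=
    ((hu.1 t₀).hasDerivAt.sub ((hv.1 t₀).hasDerivAt.const_smul c)).deriv
  rw [wronskian] at hW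
  have hg := (hu.sub_smul hv c).eq_zero_of_eq_zero hq (t₀ := t₀)
    (by simp only [c, smul_eq_mul]; field_simp; ring)
    (by rw [hderiv]; simp only [c]; field_simp; linear_combination -hW)
  exact sub_eq_zero.mp (congrFun hg t)

theorem exists_eq_mul_ofReal {ψ : ℝ → ℂ} (hψ : SolvesLinearODE q ψ) (hq : Continuous q)
    (h₀ : Integrable fun t => ‖ψ t‖ ^ 2) (h₁ : Integrable fun t => ‖deriv ψ t‖ ^ 2) :
    ∃ (z : ℂ) (w : ℝ → ℝ), ∀ t, ψ t = z * w t := by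
  have hre := hψ.clm_comp Complex.reCLM
  have him := hψ.clm_comp Complex.imCLM
  have hW := hre.wronskian_eq_zero him
    (by simpa [Complex.sq_norm_eq_re_sq_add_im_sq] using h₀)
    (by rw [Complex.reCLM.deriv_comp hψ.1, Complex.imCLM.deriv_comp hψ.1]
        simpa [Complex.sq_norm_eq_re_sq_add_im_sq] using h₁)
  by_cases hreal : ∀ t, (ψ t).im = 0
  · exact ⟨1, fun t => (ψ t).re, fun t => by simp [Complex.ext_iff, hreal]⟩
  · obtain ⟨t₀, ht₀⟩ := not_forall.mp hreal
    refine ⟨(ψ t₀).re / (ψ t₀).im + Complex.I, fun t => (ψ t).im, fun t => ?_⟩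
    have hprop := hre.eq_mul_of_wronskian_eq_zero him hq ht₀ (hW t₀) t
    apply Complex.ext
    · simpa using hprop
    · simp

end SolvesLinearODE

theorem IsGPSolutionC.solvesLinearODE {μ lam V₀ α : ℝ} {ψ : ℝ → ℂ}
    (hψ : IsGPSolutionC μ lam V₀ α ψ) :
    SolvesLinearODE (fun ξ => ξ ^ 2 + lam * ‖ψ ξ‖ ^ 2 - V₀ * Real.cos (α * ξ) ^ 2 - μ) ψ :=
  ⟨hψ.1, hψ.2.1, fun ξ => by
    have h := hψ.2.2.2.2 ξ
    rw [Complex.real_smul]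
    push_cast at h ⊢
    linear_combination -h⟩

theorem IsGPSolutionC.isGPSolutionR_of_eq_exp_mul {μ lam V₀ α θ : ℝ} {ψ : ℝ → ℂ}
    {U : ℝ → ℝ} (hψ : IsGPSolutionC μ lam V₀ α ψ)
    (hψU : ∀ ξ, ψ ξ = Complex.exp (Complex.I * θ) * U ξ) :
    IsGPSolutionR μ lam V₀ α U := by
  set e := Complex.exp (Complex.I * θ)
  have he : ‖e‖ = 1 := Complex.norm_exp_I_mul_ofReal θ
  have he0 : e ≠ 0 := Complex.exp_ne_zero _
  obtain ⟨hd, hd', h₀, h₁, heq⟩ := hψ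
  obtain rfl : ψ = fun ξ => e * U ξ := funext hψU
  have hU := hd.of_const_mul_ofReal he0
  rw [deriv_const_mul_ofReal hU] at hd' h₁ heq
  have hU' := hd'.of_const_mul_ofReal he0
  rw [deriv_const_mul_ofReal hU'] at heq
  refine ⟨hU, hU', ?_, ?_, fun ξ => ?_⟩
  · simpa [norm_mul, he] using h₀
  · simpa [norm_mul, he] using h₁
  · have h := heq ξ
    simp only [norm_mul, he, one_mul, Complex.norm_real, Real.norm_eq_abs, sq_abs] at h
    apply Complex.ofReal_injective
    apply mul_left_cancel₀ he0
    push_cast at h ⊢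
    linear_combination h

theorem complex_solution_is_phase_times_real (μ lam V₀ α : ℝ) (ψ : ℝ → ℂ)
    (hψ : IsGPSolutionC μ lam V₀ α ψ) :
    ∃ (U : ℝ → ℝ) (θ : ℝ), IsGPSolutionR μ lam V₀ α U ∧
      ∀ ξ : ℝ, ψ ξ = Complex.exp (Complex.I * θ) * (U ξ : ℂ) := by
  have hq : Continuous fun ξ => ξ ^ 2 + lam * ‖ψ ξ‖ ^ 2 - V₀ * Real.cos (α * ξ) ^ 2 - μ := by
    have := hψ.1.continuous; fun_prop
  obtain ⟨z, w, hψw⟩ := hψ.solvesLinearODE.exists_eq_mul_ofReal hq hψ.2.2.1 hψ.2.2.2.1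
  have hpolar : ∀ ξ, ψ ξ = Complex.exp (Complex.I * z.arg) * ((‖z‖ * w ξ : ℝ) : ℂ) := by
    intro ξ
    rw [hψw, mul_comm Complex.I]
    nth_rw 1 [← Complex.norm_mul_exp_arg_mul_I z]
    push_cast
    ring
  exact ⟨_, _, hψ.isGPSolutionR_of_eq_exp_mul hpolar, hpolar⟩
end

section
/- If ψ ∈ G is a ground state with Lagrange multiplier μ(ψ) (so that −ψ'' + ξ²ψ + λ|ψ|²ψ − V₀cos²(αξ)ψ = μ(ψ)ψ), then μ(ψ) = E_min + (λ/2)∫_ℝ |ψ(ξ)|⁴ dξ, and consequently the set {μ(ψ) : ψ ∈ G} is bounded in ℝ. -/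
open MeasureTheory Real

/-- Membership in the unit-charge constraint manifold `Σ₁`. -/
def InSigma1 (ψ : ℝ → ℂ) : Prop := InX ψ ∧ (∫ ξ : ℝ, ‖ψ ξ‖ ^ 2) = 1

/-- `ψ` is a ground state (a minimizer of the energy over `Σ₁`). -/
def IsGroundState (lam V₀ α : ℝ) (ψ : ℝ → ℂ) : Prop :=
  InSigma1 ψ ∧ ∀ φ : ℝ → ℂ, InSigma1 φ → energy lam V₀ α ψ ≤ energy lam V₀ α φ

/-- `ψ` satisfies the Euler–Lagrange equation with Lagrange multiplier `μ`. -/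
def IsEulerLagrange (μ lam V₀ α : ℝ) (ψ : ℝ → ℂ) : Prop :=
  Differentiable ℝ (deriv ψ) ∧
  ∀ ξ : ℝ, -deriv (deriv ψ) ξ + (ξ ^ 2 : ℝ) * ψ ξ + (lam : ℂ) * (‖ψ ξ‖ ^ 2 : ℝ) * ψ ξ
      - (V₀ : ℂ) * (Real.cos (α * ξ) ^ 2 : ℝ) * ψ ξ = (μ : ℂ) * ψ ξ

/-! Pairing the Euler–Lagrange equation with `ψ` and integrating the identity
`(Re ψ' ψ̄)' = Re ψ'' ψ̄ + |ψ'|²` over `ℝ` (the boundary terms vanish because `Re ψ' ψ̄` and its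
derivative are integrable) gives `μ = ∫|ψ'|² + ∫ξ²|ψ|² + λ∫|ψ|⁴ - V₀∫cos²(αξ)|ψ|²`, i.e.
`μ = E(ψ) + (λ/2)∫|ψ|⁴`.

All ground states have the same energy `E_min`, so it remains to bound `∫|ψ|⁴` on `Σ₁` by the
energy. Writing `|ψ(x)|²` as the integral of `2 Re ψ ψ̄'` over `(-∞, x]` gives
`‖ψ‖∞² ≤ ε + ε⁻¹‖ψ'‖₂²`, hence `∫|ψ|⁴ ≤ ε + ε⁻¹‖ψ'‖₂²`; the energy bounds `‖ψ'‖₂²` up to the term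
`(|λ|/2)∫|ψ|⁴`, which is absorbed by taking `ε = |λ| + 1`. -/

open Filter Set Topology
open scoped InnerProductSpace

section InnerProductSpace

variable {F : Type*} [NormedAddCommGroup F] [InnerProductSpace ℝ F]

lemma two_mul_inner_le_mul_add_inv_mul (x y : F) {ε : ℝ} (hε : 0 < ε) :
    2 * ⟪x, y⟫_ℝ ≤ ε * ‖x‖ ^ 2 + ε⁻¹ * ‖y‖ ^ 2 := by
  have hsq : 0 ≤ ε⁻¹ * (ε * ‖x‖ - ‖y‖) ^ 2 := by positivity
  have hexp : ε⁻¹ * (ε * ‖x‖ - ‖y‖) ^ 2 = ε * ‖x‖ ^ 2 + ε⁻¹ * ‖y‖ ^ 2 - 2 * (‖x‖ * ‖y‖) := by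
    field_simp
    ring
  linarith [real_inner_le_norm x y]

lemma integrable_inner_of_integrable_norm_sq {α : Type*} [MeasurableSpace α] {μ : Measure α}
    {f g : α → F} (hf : AEStronglyMeasurable f μ) (hg : AEStronglyMeasurable g μ)
    (hf2 : Integrable (fun a => ‖f a‖ ^ 2) μ) (hg2 : Integrable (fun a => ‖g a‖ ^ 2) μ) :
    Integrable (fun a => ⟪f a, g a⟫_ℝ) μ := by
  refine Integrable.mono' (g := fun a => ‖f a‖ ^ 2 + ‖g a‖ ^ 2) (hf2.add hg2) (hf.inner hg)
    (Eventually.of_forall fun a => ?_)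
  rw [Real.norm_eq_abs]
  nlinarith [abs_real_inner_le_norm (f a) (g a), sq_nonneg (‖f a‖ - ‖g a‖)]

lemma norm_sq_le_mul_integral_add_inv_mul_integral_deriv [CompleteSpace F] {f : ℝ → F}
    (hf : Differentiable ℝ f) (hf2 : Integrable fun t => ‖f t‖ ^ 2)
    (hf'2 : Integrable fun t => ‖deriv f t‖ ^ 2) {ε : ℝ} (hε : 0 < ε) (x : ℝ) :
    ‖f x‖ ^ 2 ≤ ε * (∫ t, ‖f t‖ ^ 2) + ε⁻¹ * ∫ t, ‖deriv f t‖ ^ 2 := by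
  have hderiv : ∀ t, HasDerivAt (fun t => ‖f t‖ ^ 2) (2 * ⟪f t, deriv f t⟫_ℝ) t :=
    fun t => (hf t).hasDerivAt.norm_sq
  have hint : Integrable fun t => 2 * ⟪f t, deriv f t⟫_ℝ :=
    (integrable_inner_of_integrable_norm_sq hf.continuous.aestronglyMeasurable
      (aestronglyMeasurable_deriv f _) hf2 hf'2).const_mul 2
  have hbound : Integrable fun t => ε * ‖f t‖ ^ 2 + ε⁻¹ * ‖deriv f t‖ ^ 2 :=
    (hf2.const_mul ε).add (hf'2.const_mul ε⁻¹)
  have hlim : Tendsto (fun t => ‖f t‖ ^ 2) atBot (𝓝 0) :=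
    tendsto_zero_of_hasDerivAt_of_integrableOn_Iic (a := 0) (fun t _ => hderiv t)
      hint.integrableOn hf2.integrableOn
  calc ‖f x‖ ^ 2 = ∫ t in Iic x, 2 * ⟪f t, deriv f t⟫_ℝ := by
        rw [integral_Iic_of_hasDerivAt_of_tendsto' (fun t _ => hderiv t) hint.integrableOn hlim,
          sub_zero]
    _ ≤ ∫ t in Iic x, (ε * ‖f t‖ ^ 2 + ε⁻¹ * ‖deriv f t‖ ^ 2) :=
        setIntegral_mono hint.integrableOn hbound.integrableOn
          fun t => two_mul_inner_le_mul_add_inv_mul _ _ hε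
    _ ≤ ∫ t, (ε * ‖f t‖ ^ 2 + ε⁻¹ * ‖deriv f t‖ ^ 2) :=
        setIntegral_le_integral hbound (Eventually.of_forall fun t => by positivity)
    _ = ε * (∫ t, ‖f t‖ ^ 2) + ε⁻¹ * ∫ t, ‖deriv f t‖ ^ 2 := by
        rw [integral_add (hf2.const_mul ε) (hf'2.const_mul ε⁻¹), integral_const_mul,
          integral_const_mul]

lemma integral_inner_add_integral_norm_sq_eq_zero {f f' f'' : ℝ → F}
    (hf : ∀ t, HasDerivAt f (f' t) t) (hf' : ∀ t, HasDerivAt f' (f'' t) t)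
    (hf2 : Integrable fun t => ‖f t‖ ^ 2) (hf'2 : Integrable fun t => ‖f' t‖ ^ 2)
    (hf'' : Integrable fun t => ⟪f'' t, f t⟫_ℝ) :
    (∫ t, ⟪f'' t, f t⟫_ℝ) + ∫ t, ‖f' t‖ ^ 2 = 0 := by
  have hcont : Continuous f := continuous_iff_continuousAt.2 fun t => (hf t).continuousAt
  have hcont' : Continuous f' := continuous_iff_continuousAt.2 fun t => (hf' t).continuousAt
  have hderiv : ∀ t, HasDerivAt (fun t => ⟪f' t, f t⟫_ℝ) (⟪f'' t, f t⟫_ℝ + ‖f' t‖ ^ 2) t := by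
    intro t
    simpa only [real_inner_self_eq_norm_sq, add_comm] using (hf' t).inner ℝ (hf t)
  rw [← integral_add hf'' hf'2]
  exact integral_eq_zero_of_hasDerivAt_of_integrable hderiv (hf''.add hf'2)
    (integrable_inner_of_integrable_norm_sq hcont'.aestronglyMeasurable
      hcont.aestronglyMeasurable hf'2 hf2)

end InnerProductSpace

lemma integrable_cos_sq_mul {g : ℝ → ℝ} (hg : Integrable g) (α : ℝ) :
    Integrable fun ξ => Real.cos (α * ξ) ^ 2 * g ξ :=
  hg.bdd_mul (c := 1)
    (by fun_prop : Continuous fun ξ => Real.cos (α * ξ) ^ 2).aestronglyMeasurable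
    (Eventually.of_forall fun ξ => by
      rw [Real.norm_eq_abs, abs_of_nonneg (sq_nonneg _)]; exact Real.cos_sq_le_one _)

lemma integral_cos_sq_mul_le {g : ℝ → ℝ} (hg : Integrable g) (hg0 : 0 ≤ g) (α : ℝ) :
    ∫ ξ, Real.cos (α * ξ) ^ 2 * g ξ ≤ ∫ ξ, g ξ :=
  integral_mono (integrable_cos_sq_mul hg α) hg fun ξ =>
    mul_le_of_le_one_left (hg0 ξ) (Real.cos_sq_le_one _)

namespace InSigma1

variable {ψ : ℝ → ℂ}

lemma integral_norm_pow_four_le (hψ : InSigma1 ψ) {ε : ℝ} (hε : 0 < ε) :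
    ∫ ξ, ‖ψ ξ‖ ^ 4 ≤ ε + ε⁻¹ * ∫ ξ, ‖deriv ψ ξ‖ ^ 2 := by
  obtain ⟨⟨hd, hI2, hK, -, hI4⟩, hnorm⟩ := hψ
  have hsup := norm_sq_le_mul_integral_add_inv_mul_integral_deriv hd hI2 hK hε
  rw [hnorm, mul_one] at hsup
  calc ∫ ξ, ‖ψ ξ‖ ^ 4 ≤ ∫ ξ, (ε + ε⁻¹ * ∫ ζ, ‖deriv ψ ζ‖ ^ 2) * ‖ψ ξ‖ ^ 2 :=
        integral_mono hI4 (hI2.const_mul _) fun ξ => by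
          rw [show ‖ψ ξ‖ ^ 4 = ‖ψ ξ‖ ^ 2 * ‖ψ ξ‖ ^ 2 by ring]
          exact mul_le_mul_of_nonneg_right (hsup ξ) (by positivity)
    _ = ε + ε⁻¹ * ∫ ξ, ‖deriv ψ ξ‖ ^ 2 := by rw [integral_const_mul, hnorm, mul_one]

lemma integral_norm_pow_four_le_energy (hψ : InSigma1 ψ) (lam V₀ α : ℝ) :
    ∫ ξ, ‖ψ ξ‖ ^ 4 ≤ (|lam| + 1) ^ 2 + energy lam V₀ α ψ + |V₀| := by
  obtain ⟨⟨-, hI2, -, -, -⟩, hnorm⟩ := id hψ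
  set Q := ∫ ξ, ‖ψ ξ‖ ^ 4
  set K := ∫ ξ, ‖deriv ψ ξ‖ ^ 2
  set C := ∫ ξ, Real.cos (α * ξ) ^ 2 * ‖ψ ξ‖ ^ 2
  have hQ0 : 0 ≤ Q := integral_nonneg fun ξ => by positivity
  have hP0 : 0 ≤ ∫ ξ, ξ ^ 2 * ‖ψ ξ‖ ^ 2 := integral_nonneg fun ξ => by positivity
  have hC0 : 0 ≤ C := integral_nonneg fun ξ => by positivity
  have hC1 : C ≤ 1 := hnorm ▸ integral_cos_sq_mul_le hI2 (fun ξ => by positivity) α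
  have hV : V₀ * C ≤ |V₀| := by nlinarith [le_abs_self V₀, abs_nonneg V₀]
  have hK : K ≤ energy lam V₀ α ψ + |V₀| + |lam| / 2 * Q := by
    have hE : energy lam V₀ α ψ = K + (∫ ξ, ξ ^ 2 * ‖ψ ξ‖ ^ 2) + lam / 2 * Q - V₀ * C := rfl
    nlinarith [neg_abs_le lam]
  set ε := |lam| + 1
  have hε : 0 < ε := by positivity
  have hεQ : ε * Q ≤ ε ^ 2 + K := by
    have := mul_le_mul_of_nonneg_left (hψ.integral_norm_pow_four_le hε) hε.le
    rwa [mul_add, ← mul_assoc, mul_inv_cancel₀ hε.ne', one_mul, ← sq] at this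
  nlinarith [abs_nonneg lam]

end InSigma1

lemma IsEulerLagrange.multiplier_eq {μ lam V₀ α : ℝ} {ψ : ℝ → ℂ} (hψ : InSigma1 ψ)
    (hEL : IsEulerLagrange μ lam V₀ α ψ) :
    μ = energy lam V₀ α ψ + lam / 2 * ∫ ξ, ‖ψ ξ‖ ^ 4 := by
  obtain ⟨⟨hd, hI2, hK, hP, hI4⟩, hnorm⟩ := hψ
  obtain ⟨hd', hEq⟩ := hEL
  have hψ'' : ∀ ξ, deriv (deriv ψ) ξ
      = (ξ ^ 2 + lam * ‖ψ ξ‖ ^ 2 - V₀ * Real.cos (α * ξ) ^ 2 - μ) • ψ ξ := by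
    intro ξ
    rw [Complex.real_smul, Complex.ofReal_sub, Complex.ofReal_sub, Complex.ofReal_add,
      Complex.ofReal_mul, Complex.ofReal_mul]
    linear_combination -hEq ξ
  have hinner : ∀ ξ, ⟪deriv (deriv ψ) ξ, ψ ξ⟫_ℝ = ξ ^ 2 * ‖ψ ξ‖ ^ 2 + lam * ‖ψ ξ‖ ^ 4
      - V₀ * (Real.cos (α * ξ) ^ 2 * ‖ψ ξ‖ ^ 2) - μ * ‖ψ ξ‖ ^ 2 := by
    intro ξ
    rw [hψ'', real_inner_smul_left, real_inner_self_eq_norm_sq]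
    ring
  have hC := integrable_cos_sq_mul hI2 α
  have hA : Integrable fun ξ => ξ ^ 2 * ‖ψ ξ‖ ^ 2 + lam * ‖ψ ξ‖ ^ 4 := hP.add (hI4.const_mul lam)
  have hB : Integrable fun ξ => ξ ^ 2 * ‖ψ ξ‖ ^ 2 + lam * ‖ψ ξ‖ ^ 4
      - V₀ * (Real.cos (α * ξ) ^ 2 * ‖ψ ξ‖ ^ 2) := hA.sub (hC.const_mul V₀)
  have key := integral_inner_add_integral_norm_sq_eq_zero (fun ξ => (hd ξ).hasDerivAt)
    (fun ξ => (hd' ξ).hasDerivAt) hI2 hK (by simp_rw [hinner]; exact hB.sub (hI2.const_mul μ))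
  simp_rw [hinner] at key
  rw [integral_sub hB (hI2.const_mul μ), integral_sub hA (hC.const_mul V₀),
    integral_add hP (hI4.const_mul lam), integral_const_mul, integral_const_mul,
    integral_const_mul, hnorm] at key
  rw [energy]
  linarith

lemma IsGroundState.energy_eq {lam V₀ α : ℝ} {ψ φ : ℝ → ℂ} (hψ : IsGroundState lam V₀ α ψ)
    (hφ : IsGroundState lam V₀ α φ) : energy lam V₀ α ψ = energy lam V₀ α φ :=
  (hψ.2 φ hφ.1).antisymm (hφ.2 ψ hψ.1)

theorem lagrange_multiplier_formula_and_bounded (lam V₀ α : ℝ) :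
    (∀ (ψ : ℝ → ℂ) (μ : ℝ), IsGroundState lam V₀ α ψ → IsEulerLagrange μ lam V₀ α ψ →
      μ = energy lam V₀ α ψ + lam / 2 * (∫ ξ : ℝ, ‖ψ ξ‖ ^ 4)) ∧
    (∃ M : ℝ, ∀ (ψ : ℝ → ℂ) (μ : ℝ), IsGroundState lam V₀ α ψ →
      IsEulerLagrange μ lam V₀ α ψ → |μ| ≤ M) := by
  refine ⟨fun ψ μ hψ hEL => hEL.multiplier_eq hψ.1, ?_⟩
  by_cases hex : ∃ ψ₀, IsGroundState lam V₀ α ψ₀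
  swap
  · exact ⟨0, fun ψ μ hψ _ => (hex ⟨ψ, hψ⟩).elim⟩
  obtain ⟨ψ₀, hψ₀⟩ := hex
  set e := energy lam V₀ α ψ₀
  refine ⟨|e| + |lam| / 2 * ((|lam| + 1) ^ 2 + e + |V₀|), fun ψ μ hψ hEL => ?_⟩
  have hQ := hψ.1.integral_norm_pow_four_le_energy lam V₀ α
  have hQ0 : 0 ≤ ∫ ξ, ‖ψ ξ‖ ^ 4 := integral_nonneg fun ξ => by positivity
  rw [hψ.energy_eq hψ₀] at hQ
  rw [hEL.multiplier_eq hψ.1, hψ.energy_eq hψ₀]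
  calc |e + lam / 2 * ∫ ξ, ‖ψ ξ‖ ^ 4| ≤ |e| + |lam / 2 * ∫ ξ, ‖ψ ξ‖ ^ 4| := abs_add_le _ _
    _ = |e| + |lam| / 2 * ∫ ξ, ‖ψ ξ‖ ^ 4 := by rw [abs_mul, abs_div, abs_two, abs_of_nonneg hQ0]
    _ ≤ |e| + |lam| / 2 * ((|lam| + 1) ^ 2 + e + |V₀|) := by gcongr
end

section
/- The function λ ↦ E_min(λ) = min{E_λ(ψ) : ψ ∈ Σ₁} is continuous and concave on ℝ, and satisfies E_min(λ) → +∞ as λ → +∞ and E_min(λ) → −∞ as λ → −∞. -/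
open MeasureTheory Real Filter Topology

/-- The minimal energy `E_min(λ)`. -/
noncomputable def Emin (V₀ α : ℝ) (lam : ℝ) : ℝ :=
  sInf {e : ℝ | ∃ ψ : ℝ → ℂ, InSigma1 ψ ∧ energy lam V₀ α ψ = e}

/-! For fixed `ψ ∈ Σ₁` the energy `λ ↦ E_λ(ψ)` is affine, so `E_min` is an infimum of affine
functions: concave, hence continuous, as soon as the infimum is finite. Finiteness comes from the
one-dimensional Sobolev bound `‖ψ‖_∞² ≤ ε‖ψ'‖₂² + ε⁻¹‖ψ‖₂²` (integrate `(‖ψ‖²)'` over `(x, ∞)`),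
which gives `‖ψ‖₄⁴ ≤ ε‖ψ'‖₂² + ε⁻¹` and then `E_λ ≥ -λ²/4 - |V₀|`.

As `λ → -∞`, `E_min` lies below the line `λ ↦ E_λ(ψ₀)` for a Gaussian `ψ₀`, whose slope
`‖ψ₀‖₄⁴/2` is positive. As `λ → +∞`, a unit mass cannot be both spread out and flat: splitting
`ℝ` at `±R` gives `3/4 ≤ 2R‖ψ‖₄⁴ + R⁻²∫ξ²‖ψ‖²`, so `E_λ ≥ 3R²/4 - |V₀|` once `λ ≥ 4R³`. -/

open Set

section SobolevSup

variable {F : Type*} [NormedAddCommGroup F] [InnerProductSpace ℝ F]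

lemma abs_two_mul_inner_le (a b : F) {ε : ℝ} (hε : 0 < ε) :
    |2 * inner ℝ a b| ≤ ε * ‖b‖ ^ 2 + ε⁻¹ * ‖a‖ ^ 2 := by
  have hab := abs_real_inner_le_norm a b
  have key : ε * (ε * ‖b‖ ^ 2 + ε⁻¹ * ‖a‖ ^ 2 - 2 * (‖a‖ * ‖b‖)) = (ε * ‖b‖ - ‖a‖) ^ 2 := by
    field_simp
    ring
  have : 2 * (‖a‖ * ‖b‖) ≤ ε * ‖b‖ ^ 2 + ε⁻¹ * ‖a‖ ^ 2 :=
    sub_nonneg.1 (nonneg_of_mul_nonneg_right (key ▸ sq_nonneg _) hε)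
  rw [abs_mul, abs_two]
  linarith

variable [CompleteSpace F] {f : ℝ → F}

lemma sq_norm_le_of_integrable (hf : Differentiable ℝ f)
    (h2 : Integrable (fun ξ => ‖f ξ‖ ^ 2)) (hD : Integrable (fun ξ => ‖deriv f ξ‖ ^ 2))
    {ε : ℝ} (hε : 0 < ε) (x : ℝ) :
    ‖f x‖ ^ 2 ≤ ε * (∫ ξ, ‖deriv f ξ‖ ^ 2) + ε⁻¹ * (∫ ξ, ‖f ξ‖ ^ 2) := by
  set g : ℝ → ℝ := fun t => 2 * inner ℝ (f t) (deriv f t)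
  have hg : ∀ t, HasDerivAt (fun t => ‖f t‖ ^ 2) (g t) t := fun t => (hf t).hasDerivAt.norm_sq
  have hbound : Integrable (fun ξ => ε * ‖deriv f ξ‖ ^ 2 + ε⁻¹ * ‖f ξ‖ ^ 2) :=
    (hD.const_mul ε).add (h2.const_mul ε⁻¹)
  have hg_le : ∀ t, ‖g t‖ ≤ ε * ‖deriv f t‖ ^ 2 + ε⁻¹ * ‖f t‖ ^ 2 := fun t =>
    abs_two_mul_inner_le _ _ hε
  have hg_int : Integrable g := by
    refine hbound.mono' ?_ (ae_of_all _ hg_le)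
    exact (aestronglyMeasurable_const.mul
      (hf.continuous.aestronglyMeasurable.inner (aestronglyMeasurable_deriv f _)))
  have hlim : Tendsto (fun t => ‖f t‖ ^ 2) atTop (𝓝 0) :=
    tendsto_zero_of_hasDerivAt_of_integrableOn_Ioi (a := x) (fun t _ => hg t)
      hg_int.integrableOn h2.integrableOn
  -- `‖f‖²` vanishes at `+∞`, so it is recovered from its derivative on `(x, ∞)`.
  have hftc : ∫ t in Ioi x, g t = 0 - ‖f x‖ ^ 2 :=
    integral_Ioi_of_hasDerivAt_of_tendsto (hg x).continuousAt.continuousWithinAt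
      (fun t _ => hg t) hg_int.integrableOn hlim
  calc ‖f x‖ ^ 2 = -∫ t in Ioi x, g t := by rw [hftc]; ring
    _ ≤ ‖∫ t in Ioi x, g t‖ := neg_le_abs _
    _ ≤ ∫ t in Ioi x, (ε * ‖deriv f t‖ ^ 2 + ε⁻¹ * ‖f t‖ ^ 2) :=
      norm_integral_le_of_norm_le hbound.integrableOn (ae_of_all _ hg_le)
    _ ≤ ∫ t, (ε * ‖deriv f t‖ ^ 2 + ε⁻¹ * ‖f t‖ ^ 2) :=
      setIntegral_le_integral hbound (ae_of_all _ fun t => by positivity)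
    _ = ε * (∫ ξ, ‖deriv f ξ‖ ^ 2) + ε⁻¹ * (∫ ξ, ‖f ξ‖ ^ 2) := by
      rw [integral_add (hD.const_mul ε) (h2.const_mul ε⁻¹), integral_const_mul, integral_const_mul]

lemma integral_norm_pow_four_le (hf : Differentiable ℝ f)
    (h2 : Integrable (fun ξ => ‖f ξ‖ ^ 2)) (hD : Integrable (fun ξ => ‖deriv f ξ‖ ^ 2))
    {ε : ℝ} (hε : 0 < ε) :
    ∫ ξ, ‖f ξ‖ ^ 4 ≤ (ε * (∫ ξ, ‖deriv f ξ‖ ^ 2) + ε⁻¹ * (∫ ξ, ‖f ξ‖ ^ 2)) * ∫ ξ, ‖f ξ‖ ^ 2 := by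
  rw [← integral_const_mul]
  refine integral_mono_of_nonneg (ae_of_all _ fun ξ => by positivity) (h2.const_mul _)
    (ae_of_all _ fun ξ => ?_)
  dsimp only
  rw [show ‖f ξ‖ ^ 4 = ‖f ξ‖ ^ 2 * ‖f ξ‖ ^ 2 by ring]
  exact mul_le_mul_of_nonneg_right (sq_norm_le_of_integrable hf h2 hD hε ξ) (by positivity)

end SobolevSup

section Confinement

variable {E : Type*} [NormedAddCommGroup E] {f : ℝ → E}

lemma le_indicator_add_of_nonneg {x R ξ : ℝ} (hx : 0 ≤ x) (hR : 0 < R) :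
    x ≤ (Icc (-R) R).indicator (fun _ => (8 * R)⁻¹) ξ + (2 * R * x ^ 2 + ξ ^ 2 * x / R ^ 2) := by
  by_cases hξ : ξ ∈ Icc (-R) R
  · rw [indicator_of_mem hξ]
    have : x ≤ (8 * R)⁻¹ + 2 * R * x ^ 2 := by
      have key : (8 * R)⁻¹ + 2 * R * x ^ 2 - x = (4 * R * x - 1) ^ 2 / (8 * R) := by
        field_simp
        ring
      linarith [key ▸ (by positivity : 0 ≤ (4 * R * x - 1) ^ 2 / (8 * R))]
    have : 0 ≤ ξ ^ 2 * x / R ^ 2 := by positivity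
    linarith
  · rw [indicator_of_notMem hξ, zero_add]
    have hRξ : R ^ 2 ≤ ξ ^ 2 := by
      simp only [mem_Icc, not_and_or, not_le] at hξ
      rcases hξ with h | h <;> nlinarith
    have : x ≤ ξ ^ 2 * x / R ^ 2 := by
      rw [le_div_iff₀ (by positivity)]
      nlinarith
    have : 0 ≤ 2 * R * x ^ 2 := by positivity
    linarith

lemma integral_sq_norm_le_pow_four_add_moment (h4 : Integrable (fun ξ => ‖f ξ‖ ^ 4))
    (hx2 : Integrable (fun ξ => ξ ^ 2 * ‖f ξ‖ ^ 2)) {R : ℝ} (hR : 0 < R) :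
    ∫ ξ, ‖f ξ‖ ^ 2 ≤ 1 / 4 + 2 * R * (∫ ξ, ‖f ξ‖ ^ 4) + (∫ ξ, ξ ^ 2 * ‖f ξ‖ ^ 2) / R ^ 2 := by
  have hind : Integrable ((Icc (-R) R).indicator (fun _ : ℝ => (8 * R)⁻¹)) :=
    (integrableOn_const (by simp)).integrable_indicator measurableSet_Icc
  have hrest : Integrable (fun ξ => 2 * R * ‖f ξ‖ ^ 4 + ξ ^ 2 * ‖f ξ‖ ^ 2 / R ^ 2) :=
    (h4.const_mul _).add (hx2.div_const _)
  calc ∫ ξ, ‖f ξ‖ ^ 2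
      ≤ ∫ ξ, ((Icc (-R) R).indicator (fun _ => (8 * R)⁻¹) ξ
          + (2 * R * ‖f ξ‖ ^ 4 + ξ ^ 2 * ‖f ξ‖ ^ 2 / R ^ 2)) := by
        refine integral_mono_of_nonneg (ae_of_all _ fun ξ => by positivity) (hind.add hrest)
          (ae_of_all _ fun ξ => ?_)
        simpa only [← pow_mul] using le_indicator_add_of_nonneg (sq_nonneg ‖f ξ‖) hR
    _ = 1 / 4 + 2 * R * (∫ ξ, ‖f ξ‖ ^ 4) + (∫ ξ, ξ ^ 2 * ‖f ξ‖ ^ 2) / R ^ 2 := by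
        rw [integral_add hind hrest, integral_add (h4.const_mul _) (hx2.div_const _),
          integral_indicator_const _ measurableSet_Icc, Real.volume_real_Icc_of_le (by linarith),
          integral_const_mul, integral_div, smul_eq_mul]
        field_simp
        ring

end Confinement

section Gaussian

noncomputable def gaussianState (ξ : ℝ) : ℂ := ((√(√π))⁻¹ * rexp (-ξ ^ 2 / 2) : ℝ)

lemma hasDerivAt_gaussianState (ξ : ℝ) :
    HasDerivAt gaussianState (-ξ * gaussianState ξ) ξ := by
  have h : HasDerivAt (fun t : ℝ => -t ^ 2 / 2) (-ξ) ξ := by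
    refine ((hasDerivAt_pow 2 ξ).neg.div_const 2).congr_deriv ?_
    push_cast
    ring
  refine (h.exp.const_mul (√(√π))⁻¹).ofReal_comp.congr_deriv ?_
  simp only [gaussianState]
  push_cast
  ring

lemma sq_norm_gaussianState (ξ : ℝ) : ‖gaussianState ξ‖ ^ 2 = (√π)⁻¹ * rexp (-1 * ξ ^ 2) := by
  rw [gaussianState, Complex.norm_real, Real.norm_eq_abs, sq_abs, mul_pow, inv_pow,
    Real.sq_sqrt (Real.sqrt_nonneg _), ← Real.exp_nat_mul]
  ring_nf

lemma sq_norm_deriv_gaussianState (ξ : ℝ) :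
    ‖deriv gaussianState ξ‖ ^ 2 = ξ ^ 2 * ‖gaussianState ξ‖ ^ 2 := by
  rw [(hasDerivAt_gaussianState ξ).deriv, norm_mul, norm_neg, Complex.norm_real,
    Real.norm_eq_abs, mul_pow, sq_abs]

lemma integrable_sq_mul_sq_norm_gaussianState :
    Integrable (fun ξ : ℝ => ξ ^ 2 * ‖gaussianState ξ‖ ^ 2) := by
  have h := (integrable_rpow_mul_exp_neg_mul_sq (b := 1) one_pos (s := 2) (by norm_num)).const_mul
    (√π)⁻¹
  refine h.congr (ae_of_all _ fun ξ => ?_)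
  simp only [sq_norm_gaussianState, neg_mul, one_mul, Real.rpow_two]
  ring

lemma gaussianState_mem_sigma1 : InSigma1 gaussianState := by
  refine ⟨⟨fun ξ => (hasDerivAt_gaussianState ξ).differentiableAt, ?_, ?_,
    integrable_sq_mul_sq_norm_gaussianState, ?_⟩, ?_⟩
  · simpa only [sq_norm_gaussianState] using (integrable_exp_neg_mul_sq one_pos).const_mul _
  · simpa only [sq_norm_deriv_gaussianState] using integrable_sq_mul_sq_norm_gaussianState
  · have h4 : ∀ ξ, ‖gaussianState ξ‖ ^ 4 = (√π)⁻¹ ^ 2 * rexp (-2 * ξ ^ 2) := fun ξ => by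
      rw [show ‖gaussianState ξ‖ ^ 4 = (‖gaussianState ξ‖ ^ 2) ^ 2 by ring, sq_norm_gaussianState,
        mul_pow, ← Real.exp_nat_mul]
      ring_nf
    simpa only [h4] using (integrable_exp_neg_mul_sq two_pos).const_mul _
  · simp only [sq_norm_gaussianState]
    rw [integral_const_mul, integral_gaussian, div_one, inv_mul_cancel₀]
    positivity

end Gaussian

section Energy

variable {ψ : ℝ → ℂ}

lemma energy_eq_energy_zero_add (lam V₀ α : ℝ) (ψ : ℝ → ℂ) :
    energy lam V₀ α ψ = energy 0 V₀ α ψ + lam / 2 * ∫ ξ, ‖ψ ξ‖ ^ 4 := by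
  simp only [energy]
  ring

lemma potential_le_abs (hψ : InSigma1 ψ) (V₀ α : ℝ) :
    V₀ * (∫ ξ, Real.cos (α * ξ) ^ 2 * ‖ψ ξ‖ ^ 2) ≤ |V₀| := by
  obtain ⟨⟨-, h2, -, -, -⟩, hnorm⟩ := hψ
  have h0 : 0 ≤ ∫ ξ, Real.cos (α * ξ) ^ 2 * ‖ψ ξ‖ ^ 2 := integral_nonneg fun ξ => by positivity
  have h1 : ∫ ξ, Real.cos (α * ξ) ^ 2 * ‖ψ ξ‖ ^ 2 ≤ 1 := by
    rw [← hnorm]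
    refine integral_mono_of_nonneg (ae_of_all _ fun ξ => by positivity) h2
      (ae_of_all _ fun ξ => ?_)
    exact mul_le_of_le_one_left (by positivity) (Real.cos_sq_le_one _)
  calc V₀ * (∫ ξ, Real.cos (α * ξ) ^ 2 * ‖ψ ξ‖ ^ 2)
      ≤ |V₀| * (∫ ξ, Real.cos (α * ξ) ^ 2 * ‖ψ ξ‖ ^ 2) :=
        mul_le_mul_of_nonneg_right (le_abs_self V₀) h0
    _ ≤ |V₀| := mul_le_of_le_one_right (abs_nonneg V₀) h1

lemma le_energy_of_inSigma1 (hψ : InSigma1 ψ) (lam V₀ α : ℝ) :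
    (∫ ξ, ‖deriv ψ ξ‖ ^ 2) + (∫ ξ, ξ ^ 2 * ‖ψ ξ‖ ^ 2) + lam / 2 * (∫ ξ, ‖ψ ξ‖ ^ 4) - |V₀|
      ≤ energy lam V₀ α ψ := by
  have := potential_le_abs hψ V₀ α
  rw [energy]
  linarith

lemma integral_norm_pow_four_pos (hψ : InSigma1 ψ) : 0 < ∫ ξ, ‖ψ ξ‖ ^ 4 := by
  obtain ⟨⟨-, -, -, -, h4⟩, hnorm⟩ := hψ
  refine (integral_nonneg fun ξ => by positivity).lt_of_ne fun h0 => ?_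
  have hzero : (fun ξ => ‖ψ ξ‖ ^ 4) =ᵐ[volume] 0 :=
    (integral_eq_zero_iff_of_nonneg (fun ξ => by positivity) h4).1 h0.symm
  have : ∫ ξ, ‖ψ ξ‖ ^ 2 = 0 := integral_eq_zero_of_ae (hzero.mono fun ξ hξ => by simpa using hξ)
  linarith

lemma neg_sq_div_four_sub_abs_le_energy (hψ : InSigma1 ψ) (lam V₀ α : ℝ) :
    -(lam ^ 2 / 4) - |V₀| ≤ energy lam V₀ α ψ := by
  have hE := le_energy_of_inSigma1 hψ lam V₀ α
  obtain ⟨⟨hd, h2, hD, -, -⟩, hnorm⟩ := hψ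
  have hD0 : 0 ≤ ∫ ξ, ‖deriv ψ ξ‖ ^ 2 := integral_nonneg fun ξ => by positivity
  have hT0 : 0 ≤ ∫ ξ, ξ ^ 2 * ‖ψ ξ‖ ^ 2 := integral_nonneg fun ξ => by positivity
  have hQ0 : 0 ≤ ∫ ξ, ‖ψ ξ‖ ^ 4 := integral_nonneg fun ξ => by positivity
  rcases le_or_gt 0 lam with hlam | hlam
  · nlinarith
  -- The attractive quartic term is controlled by the kinetic one, at the scale `ε = -2/λ`.
  have hε : 0 < -2 / lam := div_pos_of_neg_of_neg (by norm_num) hlam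
  have hQ := integral_norm_pow_four_le hd h2 hD hε
  simp only [hnorm, mul_one] at hQ
  have hscale : lam / 2 * (-2 / lam * (∫ ξ, ‖deriv ψ ξ‖ ^ 2) + (-2 / lam)⁻¹)
      = -(∫ ξ, ‖deriv ψ ξ‖ ^ 2) - lam ^ 2 / 4 := by
    have : lam ≠ 0 := hlam.ne
    field_simp
    ring
  nlinarith [mul_le_mul_of_nonpos_left hQ (by linarith : lam / 2 ≤ 0)]

lemma le_energy_of_four_mul_pow_three_le (hψ : InSigma1 ψ) {R lam : ℝ} (hR : 0 < R)
    (hlam : 4 * R ^ 3 ≤ lam) (V₀ α : ℝ) : 3 / 4 * R ^ 2 - |V₀| ≤ energy lam V₀ α ψ := by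
  have hE := le_energy_of_inSigma1 hψ lam V₀ α
  obtain ⟨⟨-, -, -, hx2, h4⟩, hnorm⟩ := hψ
  have hD0 : 0 ≤ ∫ ξ, ‖deriv ψ ξ‖ ^ 2 := integral_nonneg fun ξ => by positivity
  have hQ0 : 0 ≤ ∫ ξ, ‖ψ ξ‖ ^ 4 := integral_nonneg fun ξ => by positivity
  have hmass := integral_sq_norm_le_pow_four_add_moment h4 hx2 hR
  rw [hnorm] at hmass
  have hR2 : 0 < R ^ 2 := by positivity
  have hconf : 3 / 4 * R ^ 2 ≤ 2 * R ^ 3 * (∫ ξ, ‖ψ ξ‖ ^ 4) + ∫ ξ, ξ ^ 2 * ‖ψ ξ‖ ^ 2 := by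
    have := mul_le_mul_of_nonneg_left hmass hR2.le
    field_simp at this
    nlinarith
  nlinarith

end Energy

section MinimalEnergy

lemma bddBelow_energy (V₀ α lam : ℝ) :
    BddBelow {e : ℝ | ∃ ψ : ℝ → ℂ, InSigma1 ψ ∧ energy lam V₀ α ψ = e} := by
  refine ⟨-(lam ^ 2 / 4) - |V₀|, ?_⟩
  rintro e ⟨ψ, hψ, rfl⟩
  exact neg_sq_div_four_sub_abs_le_energy hψ lam V₀ α

lemma Emin_le_energy {V₀ α lam : ℝ} {ψ : ℝ → ℂ} (hψ : InSigma1 ψ) : Emin V₀ α lam ≤ energy lam V₀ α ψ :=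
  csInf_le (bddBelow_energy V₀ α lam) ⟨ψ, hψ, rfl⟩

lemma le_Emin {V₀ α lam b : ℝ} (h : ∀ ψ, InSigma1 ψ → b ≤ energy lam V₀ α ψ) : b ≤ Emin V₀ α lam :=
  le_csInf ⟨_, gaussianState, gaussianState_mem_sigma1, rfl⟩ fun _ ⟨ψ, hψ, he⟩ => he ▸ h ψ hψ

lemma Emin_concaveOn (V₀ α : ℝ) : ConcaveOn ℝ Set.univ (Emin V₀ α) := by
  refine ⟨convex_univ, fun a _ b _ s t hs ht hst => le_Emin fun ψ hψ => ?_⟩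
  -- `Emin` is an infimum of functions affine in `λ`.
  have ha := mul_le_mul_of_nonneg_left (Emin_le_energy (lam := a) (V₀ := V₀) (α := α) hψ) hs
  have hb := mul_le_mul_of_nonneg_left (Emin_le_energy (lam := b) (V₀ := V₀) (α := α) hψ) ht
  rw [energy_eq_energy_zero_add] at ha hb ⊢
  simp only [smul_eq_mul] at ha hb ⊢
  linear_combination ha + hb + energy 0 V₀ α ψ * hst

lemma tendsto_Emin_atTop (V₀ α : ℝ) : Tendsto (Emin V₀ α) atTop atTop := by
  refine tendsto_atTop_atTop.2 fun b => ?_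
  set R := 2 * (|b| + |V₀| + 1)
  refine ⟨4 * R ^ 3, fun lam hlam => le_Emin fun ψ hψ => ?_⟩
  have := le_energy_of_four_mul_pow_three_le hψ (by positivity) hlam V₀ α
  nlinarith [le_abs_self b, abs_nonneg V₀]

lemma tendsto_Emin_atBot (V₀ α : ℝ) : Tendsto (Emin V₀ α) atBot atBot := by
  have hQ := integral_norm_pow_four_pos gaussianState_mem_sigma1
  have hline : Tendsto (fun lam => energy 0 V₀ α gaussianState
      + lam / 2 * ∫ ξ, ‖gaussianState ξ‖ ^ 4) atBot atBot :=
    tendsto_atBot_add_const_left _ _ ((tendsto_id.atBot_div_const two_pos).atBot_mul_const hQ)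
  refine tendsto_atBot_mono (fun lam => ?_) hline
  rw [← energy_eq_energy_zero_add]
  exact Emin_le_energy gaussianState_mem_sigma1

end MinimalEnergy

theorem Emin_continuous_concave_limits (V₀ α : ℝ) :
    Continuous (Emin V₀ α) ∧
    ConcaveOn ℝ Set.univ (Emin V₀ α) ∧
    Tendsto (Emin V₀ α) atTop atTop ∧
    Tendsto (Emin V₀ α) atBot atBot :=
  ⟨continuousOn_univ.1 ((Emin_concaveOn V₀ α).continuousOn isOpen_univ),
    Emin_concaveOn V₀ α, tendsto_Emin_atTop V₀ α, tendsto_Emin_atBot V₀ α⟩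
end
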